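/- For every real P > 0, define g(t) := (1 + P) − ln(2·(1 + P)) + t·P/(1 + P) − √(1 + 4·P·t) + ln(1 + √(1 + 4·P·t)). Then g(t) ≥ 0 for all t ≥ 0, and g(t) = 0 if and only if t = 1 + P. -/

import Mathlib

/-- The per-block exponent of the ratio of the shell-code-induced output
density bound to the i.i.d. Gaussian output density `N(0, (1+P)·Iₙ)`. -/
noncomputable def shellExponent (P t : ℝ) : ℝ :=
  (1 + P) - Real.log (2 * (1 + P)) + t * P / (1 + P) - Real.sqrt (1 + 4 * P * t) +
    Real.log (1 + Real.sqrt (1 + 4 * P * t))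

/-!
With `s = √(1 + 4Pt)` and `x = (1 + s) / (2(1 + P))`, the exponent is
`(1 + P)(x - 1)² - (x - 1 - log x)`. The bound `log x ≥ 1 - 1/x` (strict for `x ≠ 1`) gives
`x - 1 - log x ≤ (x - 1)² / x`, and `1/x ≤ 1 + P` because `s ≥ 1`. Hence the exponent is
nonnegative and vanishes only at `x = 1`, i.e. at `s = 1 + 2P`, i.e. at `t = 1 + P`.
-/

open Real

lemma sub_one_sub_log_lt_sq_div {x : ℝ} (hx : 0 < x) (hx1 : x ≠ 1) :
    x - 1 - log x < (x - 1) ^ 2 / x := by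
  have h := log_lt_sub_one_of_pos (inv_pos.mpr hx) (inv_ne_one.mpr hx1)
  rw [log_inv] at h
  have hsq : (x - 1) ^ 2 / x = x - 2 + x⁻¹ := by field_simp; ring
  linarith

lemma sub_one_sub_log_lt_mul_sq {b x : ℝ} (hx : 0 < x) (hx1 : x ≠ 1) (hbx : 2 ≤ b * x) :
    x - 1 - log x < b / 2 * (x - 1) ^ 2 := by
  have hinv : 1 / x ≤ b / 2 := by rw [div_le_div_iff₀ hx two_pos]; linarith
  calc x - 1 - log x < (x - 1) ^ 2 / x := sub_one_sub_log_lt_sq_div hx hx1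
    _ = 1 / x * (x - 1) ^ 2 := by ring
    _ ≤ b / 2 * (x - 1) ^ 2 := by gcongr

noncomputable def shellRatio (P t : ℝ) : ℝ :=
  (1 + √(1 + 4 * P * t)) / (2 * (1 + P))

lemma shellExponent_eq {P t : ℝ} (hP : 1 + P ≠ 0) (ht : 0 ≤ 1 + 4 * P * t) :
    shellExponent P t =
      (1 + P) * (shellRatio P t - 1) ^ 2 - (shellRatio P t - 1 - log (shellRatio P t)) := by
  rw [shellExponent, shellRatio]
  set s := √(1 + 4 * P * t)
  have hs : s ^ 2 = 1 + 4 * P * t := sq_sqrt ht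
  have hs1 : 1 + s ≠ 0 := by positivity
  have hPt : t * P / (1 + P) = (s ^ 2 - 1) / (4 * (1 + P)) := by
    rw [hs]; field_simp; ring
  rw [log_div hs1 (by simpa using hP), hPt]
  field_simp
  ring

lemma two_le_mul_shellRatio {P t : ℝ} (hP : 0 ≤ P) (ht : 0 ≤ t) :
    2 ≤ 2 * (1 + P) * shellRatio P t := by
  have hs : 1 ≤ √(1 + 4 * P * t) := one_le_sqrt.mpr (by nlinarith)
  rw [shellRatio, mul_div_cancel₀ _ (by positivity)]
  linarith

lemma shellRatio_eq_one_iff {P t : ℝ} (hP : 0 < P) (ht : 0 ≤ t) :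
    shellRatio P t = 1 ↔ t = 1 + P := by
  have hsqrt : √(1 + 4 * P * t) = 1 + 2 * P ↔ 1 + 4 * P * t = (1 + 2 * P) ^ 2 :=
    sqrt_eq_iff_eq_sq (by positivity) (by positivity)
  rw [shellRatio, div_eq_one_iff_eq (by positivity)]
  constructor
  · intro h
    have h' := hsqrt.mp (by linarith)
    nlinarith
  · intro h
    have := hsqrt.mpr (by rw [h]; ring)
    linarith

/-- The exponent `g(t)` is nonnegative for all `t ≥ 0`, and vanishes exactly
at `t = 1 + P`. -/
theorem shell_exponent_nonneg (P : ℝ) (hP : 0 < P) :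
    ∀ t : ℝ, 0 ≤ t →
      0 ≤ shellExponent P t ∧ (shellExponent P t = 0 ↔ t = 1 + P) := by
  intro t ht
  have hg := shellExponent_eq (P := P) (t := t) (by positivity) (by positivity)
  by_cases hx : shellRatio P t = 1
  · have hzero : shellExponent P t = 0 := by simp [hg, hx]
    simp [hzero, ← shellRatio_eq_one_iff hP ht, hx]
  · have hpos : 0 < shellExponent P t := by
      have hlt := sub_one_sub_log_lt_mul_sq (by rw [shellRatio]; positivity) hx
        (two_le_mul_shellRatio hP.le ht)
      rw [hg]
      linarith
    exact ⟨hpos.le, by simp [hpos.ne', ← shellRatio_eq_one_iff hP ht, hx]⟩
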